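/- Let B be the bilinear form on ℚ⁴ given by B(x,y) = x₀y₀ − x₁y₁ − 2x₂y₂ − 2x₃y₃ and let v = (2,0,1,1), an isotropic vector. Then { x ∈ ℚ⁴ : B(x,w) = 0 for every w ∈ ℤ⁴ with B(w,w) = −1 and B(w,v) = 0 } = ℚ·v, i.e. the common orthogonal of all (−1)-vectors orthogonal to v is exactly the line spanned by v. -/
import Mathlib


/-- The Gram form of the hyperbolic lattice `ℤ^{1,1} ⊕ ℤ²(−2)` attached to the
odd 0-cusp of type 1, over an arbitrary commutative ring. -/
def B {R : Type*} [CommRing R] (x y : Fin 4 → R) : R :=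
  x 0 * y 0 - x 1 * y 1 - 2 * x 2 * y 2 - 2 * x 3 * y 3

/-- The isotropic vector `v = (2,0,1,1)` in `ℚ⁴`. -/
def v : Fin 4 → ℚ := ![2, 0, 1, 1]

/-- The common orthogonal of all `(−1)`-vectors of `ℤ^{1,1} ⊕ ℤ²(−2)` orthogonal to
the isotropic vector `v = (2,0,1,1)` is exactly the line `ℚ·v`. -/
theorem stmt_8 :
    {x : Fin 4 → ℚ | ∀ w : Fin 4 → ℤ,
        B w w = -1 → B (fun i => (w i : ℚ)) v = 0 → B x (fun i => (w i : ℚ)) = 0} =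
      {x : Fin 4 → ℚ | ∃ q : ℚ, x = q • v} := by
  ext x
  simp only [Set.mem_setOf_eq]
  constructor
  · intro h
    have h1 := h ![0,1,0,0] (by simp [B]) (by simp [B, v])
    have h2 := h ![1,0,1,0] (by simp [B]) (by simp [B, v])
    have h3 := h ![1,0,0,1] (by simp [B]) (by simp [B, v])
    simp [B] at h1 h2 h3
    refine ⟨x 0 / 2, funext fun i => ?_⟩
    fin_cases i <;> simp [v] <;> linarith
  · rintro ⟨q, rfl⟩ w hw hwv
    simp only [B, v, Pi.smul_apply, Matrix.cons_val_zero, Matrix.cons_val_one,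
      Matrix.head_cons, Matrix.cons_val_two, Matrix.tail_cons, Matrix.cons_val_three,
      smul_eq_mul] at *
    linear_combination q * hwv
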